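/- Signal-weight upper bound: for any signal index i, the softmax weight satisfies w_i ≤ (1 + (k−1)·e^{−ε_s} + (N−k)·e^{−D})^{−1}, where D = M + ε_s + ε_η = max{r_s} − min{r_η}. -/
import Mathlib


/-- Signal-weight upper bound for softmax weights. -/
theorem softmax_signal_weight_upper_bound (N : ℕ) (r : Fin N → ℝ)
    (S : Finset (Fin N)) (hS : S.Nonempty) (hSc : Sᶜ.Nonempty)
    (i : Fin N) (hi : i ∈ S) :
    let k : ℝ := S.card
    let εs : ℝ := S.sup' hS r - S.inf' hS r
    let D : ℝ := S.sup' hS r - Sᶜ.inf' hSc r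
    Real.exp (r i) / ∑ j, Real.exp (r j) ≤
      (1 + (k - 1) * Real.exp (-εs) + ((N : ℝ) - k) * Real.exp (-D))⁻¹ := by
  intro k εs D
  set a := Real.exp (r i) with ha_def
  have ha : 0 < a := Real.exp_pos _
  have hk1 : (1:ℝ) ≤ k := by simp only [k]; exact_mod_cast Finset.card_pos.mpr hS
  have hcompl : (Sᶜ.card : ℝ) = (N : ℝ) - k := by
    have h := Finset.card_add_card_compl S
    simp only [Fintype.card_fin] at h
    have : (S.card : ℝ) + (Sᶜ.card : ℝ) = (N : ℝ) := by exact_mod_cast h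
    simp only [k]; linarith
  have hNk : (0:ℝ) ≤ (N : ℝ) - k := by
    rw [← hcompl]; positivity
  have hle_sup : r i ≤ S.sup' hS r := Finset.le_sup' r hi
  -- bound for j in S
  have hSb : ∀ j ∈ S, Real.exp (r i - εs) ≤ Real.exp (r j) := by
    intro j hj
    apply Real.exp_le_exp.mpr
    have := Finset.inf'_le r hj
    simp only [εs]
    linarith
  have hScb : ∀ j ∈ Sᶜ, Real.exp (r i - D) ≤ Real.exp (r j) := by
    intro j hj
    apply Real.exp_le_exp.mpr
    have := Finset.inf'_le r hj
    simp only [D]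
    linarith
  have hC : 0 < 1 + (k - 1) * Real.exp (-εs) + ((N:ℝ) - k) * Real.exp (-D) := by
    have h1 : 0 ≤ (k-1) * Real.exp (-εs) :=
      mul_nonneg (by linarith) (Real.exp_nonneg _)
    have h2 : 0 ≤ ((N:ℝ)-k) * Real.exp (-D) := mul_nonneg hNk (Real.exp_nonneg _)
    linarith
  have hsum : a * (1 + (k - 1) * Real.exp (-εs) + ((N:ℝ) - k) * Real.exp (-D))
      ≤ ∑ j, Real.exp (r j) := by
    rw [← Finset.sum_add_sum_compl S (fun j => Real.exp (r j))]
    have h1 : a + ((S.erase i).card : ℝ) * Real.exp (r i - εs)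
        ≤ ∑ j ∈ S, Real.exp (r j) := by
      rw [← Finset.add_sum_erase S _ hi]
      have : ((S.erase i).card : ℝ) * Real.exp (r i - εs)
          ≤ ∑ j ∈ S.erase i, Real.exp (r j) := by
        calc ((S.erase i).card : ℝ) * Real.exp (r i - εs)
            = (S.erase i).card • Real.exp (r i - εs) := by
              rw [nsmul_eq_mul]
          _ ≤ ∑ j ∈ S.erase i, Real.exp (r j) :=
              Finset.card_nsmul_le_sum _ _ _ (fun j hj => hSb j (Finset.mem_of_mem_erase hj))
      linarith
    have h2 : ((Sᶜ.card) : ℝ) * Real.exp (r i - D) ≤ ∑ j ∈ Sᶜ, Real.exp (r j) := by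
      calc ((Sᶜ.card) : ℝ) * Real.exp (r i - D)
          = Sᶜ.card • Real.exp (r i - D) := by rw [nsmul_eq_mul]
        _ ≤ _ := Finset.card_nsmul_le_sum _ _ _ hScb
    have hcard : ((S.erase i).card : ℝ) = k - 1 := by
      rw [Finset.card_erase_of_mem hi]
      have : 1 ≤ S.card := Finset.card_pos.mpr hS
      push_cast [Nat.cast_sub this]
      rfl
    have e1 : Real.exp (r i - εs) = a * Real.exp (-εs) := by
      rw [ha_def, ← Real.exp_add]; ring_nf
    have e2 : Real.exp (r i - D) = a * Real.exp (-D) := by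
      rw [ha_def, ← Real.exp_add]; ring_nf
    rw [hcard, e1] at h1
    rw [hcompl, e2] at h2
    nlinarith
  have hpos : 0 < ∑ j, Real.exp (r j) :=
    lt_of_lt_of_le (by nlinarith) hsum
  rw [div_le_iff₀ hpos]
  calc a = (1 + (k - 1) * Real.exp (-εs) + ((N:ℝ) - k) * Real.exp (-D))⁻¹ *
        (a * (1 + (k - 1) * Real.exp (-εs) + ((N:ℝ) - k) * Real.exp (-D))) := by
        field_simp
    _ ≤ _ := mul_le_mul_of_nonneg_left hsum (inv_nonneg.mpr hC.le)
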